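/- arXiv:2506.16131 — 6 statements merged into one kernel-verified Lean document; each statement's English description precedes it below -/
import Mathlib

section
/- For every integer n ≥ 0, as polynomials in two variables x and y over the rationals, (∏_{a=1}^{n}(x - a) - ∏_{a=1}^{n}(y - a)) / (x - y) = ∑_{k=0}^{n-1} C(n,k) * ∏_{a=1}^{k}((k+1)/(n+1) * y - a) * ∏_{a=1}^{n-1-k}(x - (k+1)/(n+1) * y - a). Equivalently, multiplying through by (x-y): ∏_{a=1}^{n}(x-a) - ∏_{a=1}^{n}(y-a) = (x-y) * ∑_{k=0}^{n-1} C(n,k) * ∏_{a=1}^{k}((k+1)y/(n+1) - a) * ∏_{a=1}^{n-1-k}(x - (k+1)y/(n+1) - a). -/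
/-!
With `(s)ₘ = s (s - 1) ⋯ (s - m + 1)` the falling factorial (`descPochhammer`), the products
are `∏_{a=1}^m (s - a) = (s - 1)ₘ`, and the identity is the specialization `x ↦ x - 1`,
`w = y/(n+1) - 1`, `z = y/(n+1)` of an Abel-type identity for falling factorials:
`(x)ₙ = (w + nz)ₙ + (x - w - nz) ∑ₖ C(n,k) (w + kz)ₖ (x - w - kz - 1)ₙ₋₁₋ₖ`.
That identity is proved by induction on `n`. Since `(x + 1)ₘ₊₁ - (x)ₘ₊₁ = (m + 1) (x)ₘ`, the
induction hypothesis shows that the difference of the two sides at `n + 1` is a polynomial in `x`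
invariant under `x ↦ x + 1`; it vanishes at `x = w + (n + 1) z`, hence at infinitely many points.
-/

open MvPolynomial Finset

/-- `x` and `y` in `ℚ[x,y]`. -/
noncomputable def xP : MvPolynomial (Fin 2) ℚ := MvPolynomial.X 0
noncomputable def yP : MvPolynomial (Fin 2) ℚ := MvPolynomial.X 1

namespace Polynomial

theorem eq_zero_of_eval_add_one_eq_of_isRoot {R : Type*} [CommRing R] [IsDomain R]
    [CharZero R] {p : R[X]} {s : R} (hper : ∀ x, p.eval (x + 1) = p.eval x) (hs : p.IsRoot s) :
    p = 0 := by
  have hroot : ∀ m : ℕ, p.IsRoot (s + m) := by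
    intro m
    induction m with
    | zero => simpa using hs
    | succ m ih => rwa [IsRoot, Nat.cast_succ, ← add_assoc, hper]
  refine p.eq_zero_of_infinite_isRoot (Set.infinite_of_injective_forall_mem ?_ hroot)
  intro a b hab
  exact_mod_cast add_left_cancel hab

variable {R : Type*} [CommRing R]

theorem descPochhammer_succ_eval_add_one (n : ℕ) (x : R) :
    (descPochhammer R (n + 1)).eval (x + 1) =
      (descPochhammer R (n + 1)).eval x + (n + 1) * (descPochhammer R n).eval x := by
  rw [descPochhammer_succ_eval n x]
  conv_lhs => rw [descPochhammer_succ_left]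
  simp only [eval_mul, eval_X, eval_comp, eval_sub, eval_one, add_sub_cancel_right]
  ring

theorem prod_range_sub_add_one_eq_descPochhammer_eval (m : ℕ) (s : R) :
    ∏ a ∈ range m, (s - ((a : R) + 1)) = (descPochhammer R m).eval (s - 1) := by
  rw [descPochhammer_eval_eq_prod_range]
  exact prod_congr rfl fun a _ => by ring

noncomputable def abelTerm (w z : R) (n k : ℕ) (x : R) : R :=
  n.choose k * (descPochhammer R k).eval (w + k * z) *
    (descPochhammer R (n - 1 - k)).eval (x - (w + k * z) - 1)

noncomputable def abelSum (w z : R) (n : ℕ) (x : R) : R :=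
  ∑ k ∈ range n, abelTerm w z n k x

theorem exists_eval_eq_abelSum (w z : R) (n : ℕ) :
    ∃ p : R[X], ∀ x, p.eval x = abelSum w z n x :=
  ⟨∑ k ∈ range n, C (n.choose k * (descPochhammer R k).eval (w + k * z)) *
    (descPochhammer R (n - 1 - k)).comp (X - C (w + k * z) - 1),
    fun x => by simp [abelSum, abelTerm, eval_finsetSum, eval_comp]⟩

theorem abelTerm_succ_sub {n k : ℕ} (hk : k < n) (w z x : R) :
    (x + 1 - (w + (n + 1) * z)) * abelTerm w z (n + 1) k (x + 1) -
      (x - (w + (n + 1) * z)) * abelTerm w z (n + 1) k x =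
    (n + 1) * ((x - (w + n * z)) * abelTerm w z n k x) := by
  obtain ⟨m, rfl⟩ := Nat.exists_eq_add_of_lt hk
  have hchoose :
      ((k + m + 1 + 1).choose k : R) * (m + 2) = (k + m + 1 + 1) * (k + m + 1).choose k := by
    have h := Nat.choose_mul_succ_eq (k + m + 1) k
    rw [show k + m + 1 + 1 - k = m + 2 by omega, mul_comm] at h
    simpa using congrArg (Nat.cast : ℕ → R) h.symm
  rw [abelTerm, abelTerm, abelTerm, show k + m + 1 + 1 - 1 - k = m + 1 by omega,
    show k + m + 1 - 1 - k = m by omega,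
    show x + 1 - (w + k * z) - 1 = x - (w + k * z) - 1 + 1 by ring,
    descPochhammer_succ_eval_add_one, descPochhammer_succ_eval]
  push_cast
  linear_combination (x - (w + (k + m + 1) * z)) * (descPochhammer R k).eval (w + k * z) *
    (descPochhammer R m).eval (x - (w + k * z) - 1) * hchoose

theorem abelSum_succ_sub (n : ℕ) (w z x : R) :
    (x + 1 - (w + (n + 1) * z)) * abelSum w z (n + 1) (x + 1) -
      (x - (w + (n + 1) * z)) * abelSum w z (n + 1) x =
    (n + 1) * ((descPochhammer R n).eval (w + n * z) + (x - (w + n * z)) * abelSum w z n x) := by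
  simp only [abelSum, mul_sum, ← sum_sub_distrib]
  rw [sum_range_succ, sum_congr rfl fun k hk => abelTerm_succ_sub (mem_range.mp hk) w z x]
  simp only [abelTerm, Nat.add_sub_cancel, Nat.sub_self, descPochhammer_zero, eval_one,
    Nat.choose_succ_self_right]
  rw [mul_add, mul_sum]
  push_cast
  ring

theorem descPochhammer_eval_eq_add_mul_abelSum [IsDomain R] [CharZero R] (w z : R) (n : ℕ)
    (x : R) :
    (descPochhammer R n).eval x =
      (descPochhammer R n).eval (w + n * z) + (x - (w + n * z)) * abelSum w z n x := by
  induction n generalizing x with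
  | zero => simp [abelSum]
  | succ n ih =>
    obtain ⟨p, hp⟩ := exists_eval_eq_abelSum w z (n + 1)
    push_cast
    set s := w + (n + 1) * z
    have hL :
        descPochhammer R (n + 1) - C ((descPochhammer R (n + 1)).eval s) - (X - C s) * p = 0 := by
      refine eq_zero_of_eval_add_one_eq_of_isRoot (s := s) (fun y => ?_) (by simp [IsRoot])
      simp only [eval_sub, eval_mul, eval_X, eval_C, hp]
      linear_combination descPochhammer_succ_eval_add_one n y - abelSum_succ_sub n w z y +
        (n + 1) * ih y
    have hx := congrArg (eval x) hL
    simp only [eval_sub, eval_mul, eval_X, eval_C, hp, eval_zero] at hx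
    linear_combination hx

end Polynomial

theorem key_polynomial_identity (n : ℕ) :
    (∏ a ∈ Finset.range n, (xP - C ((a : ℚ) + 1))) -
      (∏ a ∈ Finset.range n, (yP - C ((a : ℚ) + 1))) =
    (xP - yP) *
      ∑ k ∈ Finset.range n, C ((n.choose k : ℚ)) *
        (∏ a ∈ Finset.range k,
            (C (((k : ℚ) + 1) / ((n : ℚ) + 1)) * yP - C ((a : ℚ) + 1))) *
        (∏ a ∈ Finset.range (n - 1 - k),
            (xP - C (((k : ℚ) + 1) / ((n : ℚ) + 1)) * yP - C ((a : ℚ) + 1))) := by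
  refine MvPolynomial.funext fun v => ?_
  simp only [map_sub, map_mul, map_sum, map_prod, eval_X, eval_C, xP, yP,
    Polynomial.prod_range_sub_add_one_eq_descPochhammer_eval]
  have hn : (n : ℚ) + 1 ≠ 0 := by positivity
  have hlast : v 1 / (n + 1) - 1 + n * (v 1 / (n + 1)) = v 1 - 1 := by field_simp; ring
  have hshift (k : ℕ) :
      v 1 / (n + 1) - 1 + k * (v 1 / (n + 1)) = (k + 1) / (n + 1) * v 1 - 1 := by
    field_simp; ring
  rw [Polynomial.descPochhammer_eval_eq_add_mul_abelSum (v 1 / (n + 1) - 1) (v 1 / (n + 1)) n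
    (v 0 - 1), hlast, add_sub_cancel_left, Polynomial.abelSum]
  congr 1
  · ring
  refine sum_congr rfl fun k _ => ?_
  rw [Polynomial.abelTerm, hshift]
  ring_nf
end

section
/- For integers k ≥ 2 and l ≥ 1, s(l,k)/(l-1)! = (1/(k-1)!) ∫_{[0,1]^{k-1}} G_l(z₁,…,z_{k-1}) dz₁⋯dz_{k-1}, where G_l(z₁,…,z_{k-1}) = ∏_{j=1}^{k-1} 1/(1-z_j) + ∑_{a=1}^{k-1} (z_a^{l-1}/(z_a - 1)) ∏_{j≠a} 1/(z_a - z_j) and s(l,k) is the unsigned Stirling number of the first kind. -/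
open MeasureTheory Finset

/-- Unsigned Stirling numbers of the first kind. -/
def stirling1 : ℕ → ℕ → ℕ
  | 0, 0 => 1
  | 0, _ + 1 => 0
  | _ + 1, 0 => 0
  | n + 1, j + 1 => stirling1 n j + n * stirling1 n (j + 1)

/-- `G_l(z₁,…,z_{k-1}) = ∏_j 1/(1-z_j) + ∑_a z_a^{l-1}/(z_a-1) ∏_{j≠a} 1/(z_a-z_j)`. -/
noncomputable def Gfun (l : ℕ) {d : ℕ} (z : Fin d → ℝ) : ℝ :=
  (∏ j : Fin d, 1 / (1 - z j)) +
    ∑ a : Fin d, (z a) ^ (l - 1) / (z a - 1) *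
      ∏ j ∈ Finset.univ.erase a, 1 / (z a - z j)

/-!
For pairwise distinct nodes, `G_l(z)` is the divided difference of `x ↦ x ^ (l - 1)` at the
`k` nodes `1, z₁, …, z_{k-1}`. The divided difference of `x ^ N` at `m + 1` distinct nodes is the
complete homogeneous symmetric polynomial `h_{N-m}` of the nodes, so off a null set
`G_l(z) = h_{l-k}(1, z) = ∑_{n ≤ l-k} h_n(z)`. Integrating monomials over the cube turns `h_n`
into `A_d(n) = ∑_{|c| = n} ∏_j 1 / (c_j + 1)`, `d = k - 1`. Since `∑_j (c_j + 1) = n + d`, one gets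
`(n + d) A_d(n) = d ∑_{m ≤ n} A_{d-1}(m)`, which turns `(l - 1)! ∑_{n < l-d} A_d(n) = d! s(l, d+1)`
into the recurrence `s(l+1, k) = l s(l, k) + s(l, k-1)`.
-/

theorem stirling1_eq_stirlingFirst (n k : ℕ) : stirling1 n k = Nat.stirlingFirst n k := by
  induction n generalizing k with
  | zero => cases k <;> rfl
  | succ n ih =>
    cases k with
    | zero => rfl
    | succ k => rw [Nat.stirlingFirst_succ_succ, stirling1, ih, ih, add_comm]

theorem Finset.cons_erase_of_mem {α : Type*} [DecidableEq α] {s : Finset α} {a : α} (ha : a ∈ s) :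
    cons a (s.erase a) (notMem_erase a s) = s := by
  rw [cons_eq_insert, insert_erase ha]

theorem Finset.univ_option_eq_cons (α : Type*) [Fintype α] :
    (univ : Finset (Option α)) = cons none (univ.map Function.Embedding.some) (by simp) :=
  univ_option α

section Compositions

variable {ι : Type*} [DecidableEq ι] {R : Type*} [CommSemiring R]

def compositionSum (f : ι → ℕ → R) (s : Finset ι) (n : ℕ) : R :=
  ∑ c ∈ s.piAntidiag n, ∏ j ∈ s, f j (c j)

theorem compositionSum_zero (f : ι → ℕ → R) {s : Finset ι} (hf : ∀ j ∈ s, f j 0 = 1) :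
    compositionSum f s 0 = 1 := by
  rw [compositionSum, piAntidiag_zero, sum_singleton]
  exact prod_eq_one hf

theorem compositionSum_empty (f : ι → ℕ → R) (n : ℕ) :
    compositionSum f ∅ n = if n = 0 then 1 else 0 := by
  cases n <;> simp [compositionSum]

theorem compositionSum_congr {f g : ι → ℕ → R} {s : Finset ι} (h : ∀ j ∈ s, f j = g j) :
    compositionSum f s = compositionSum g s := by
  funext n
  exact sum_congr rfl fun c _ => prod_congr rfl fun j hj => by rw [h j hj]

theorem compositionSum_cons (f : ι → ℕ → R) {i : ι} {s : Finset ι} (hi : i ∉ s) (n : ℕ) :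
    compositionSum f (cons i s hi) n =
      ∑ p ∈ antidiagonal n, f i p.1 * compositionSum f s p.2 := by
  rw [compositionSum, piAntidiag_cons, sum_disjiUnion]
  refine sum_congr rfl fun p _ => ?_
  rw [sum_map, compositionSum, mul_sum]
  refine sum_congr rfl fun c hc => ?_
  have hci : c i = 0 := by
    by_contra h
    exact hi ((mem_piAntidiag.1 hc).2 i h)
  rw [prod_cons]
  simp only [addRightEmbedding_apply, Pi.add_apply, if_pos, hci, zero_add]
  congr 1
  refine prod_congr rfl fun j hj => ?_
  rw [if_neg (ne_of_mem_of_not_mem hj hi), add_zero]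

theorem compositionSum_of_mem (f : ι → ℕ → R) {i : ι} {s : Finset ι} (hi : i ∈ s) (n : ℕ) :
    compositionSum f s n =
      ∑ p ∈ antidiagonal n, f i p.1 * compositionSum f (s.erase i) p.2 := by
  conv_lhs => rw [← cons_erase_of_mem hi]
  exact compositionSum_cons f _ n

theorem compositionSum_of_mem_of_eq_one (f : ι → ℕ → R) {i : ι} {s : Finset ι} (hi : i ∈ s)
    (hf : ∀ a, f i a = 1) (n : ℕ) :
    compositionSum f s n = ∑ m ∈ range (n + 1), compositionSum f (s.erase i) m := by
  rw [compositionSum_of_mem f hi, ← Nat.sum_antidiagonal_swap]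
  simp only [Prod.snd_swap, Prod.fst_swap, hf, one_mul]
  exact Nat.sum_antidiagonal_eq_sum_range_succ (fun m _ => compositionSum f (s.erase i) m) n

theorem compositionSum_map {κ : Type*} [DecidableEq κ] (f : κ → ℕ → R) (e : ι ↪ κ)
    (s : Finset ι) (n : ℕ) :
    compositionSum f (s.map e) n = compositionSum (fun j => f (e j)) s n := by
  induction s using Finset.cons_induction generalizing n with
  | empty => rw [map_empty, compositionSum_empty, compositionSum_empty]
  | cons i s hi ih => simp only [map_cons, compositionSum_cons, ih]

end Compositions

section CompleteHomog

variable {ι : Type*} [DecidableEq ι] {R : Type*} [CommSemiring R]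

def completeHomog (x : ι → R) (s : Finset ι) (n : ℕ) : R :=
  compositionSum (fun j a => x j ^ a) s n

theorem completeHomog_zero (x : ι → R) (s : Finset ι) : completeHomog x s 0 = 1 :=
  compositionSum_zero _ fun _ _ => pow_zero _

theorem completeHomog_empty_succ (x : ι → R) (n : ℕ) : completeHomog x ∅ (n + 1) = 0 := by
  rw [completeHomog, compositionSum_empty, if_neg n.succ_ne_zero]

theorem completeHomog_succ (x : ι → R) {s : Finset ι} {i : ι} (hi : i ∈ s) (n : ℕ) :
    completeHomog x s (n + 1) =
      x i * completeHomog x s n + completeHomog x (s.erase i) (n + 1) := by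
  simp only [completeHomog, compositionSum_of_mem _ hi, Nat.sum_antidiagonal_succ, mul_sum]
  rw [pow_zero, one_mul, add_comm]
  congr 1
  exact sum_congr rfl fun p _ => by ring

theorem completeHomog_option_elim_one [Fintype ι] (x : ι → R) (n : ℕ) :
    completeHomog (fun o : Option ι => o.elim 1 x) univ n =
      ∑ m ∈ range (n + 1), completeHomog x univ m := by
  rw [completeHomog, compositionSum_of_mem_of_eq_one _ (mem_univ none) fun a => one_pow a]
  rw [univ_option_eq_cons, erase_cons]
  simp only [compositionSum_map]
  rfl

theorem continuous_completeHomog [TopologicalSpace R] [IsTopologicalSemiring R]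
    (s : Finset ι) (n : ℕ) :
    Continuous fun x : ι → R => completeHomog x s n := by
  unfold completeHomog compositionSum
  fun_prop

end CompleteHomog

section DividedDifference

variable {ι : Type*} [DecidableEq ι] {K : Type*} [Field K] {x : ι → K} {t : Finset ι}

-- The divided difference of `X ^ N` at the nodes `x j`, `j ∈ t`, in Lagrange form.
def divDiffPow (x : ι → K) (t : Finset ι) (N : ℕ) : K :=
  ∑ a ∈ t, x a ^ N * ∏ j ∈ t.erase a, (x a - x j)⁻¹

theorem sub_mul_prod_erase_inv (hx : Set.InjOn x t) {a i : ι} (ha : a ∈ t) (hi : i ∈ t)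
    (hai : a ≠ i) :
    (x a - x i) * ∏ j ∈ t.erase a, (x a - x j)⁻¹ = ∏ j ∈ (t.erase i).erase a, (x a - x j)⁻¹ := by
  have hne : x a - x i ≠ 0 := sub_ne_zero.2 fun h => hai (hx ha hi h)
  rw [← mul_prod_erase (t.erase a) _ (mem_erase.2 ⟨hai.symm, hi⟩), erase_right_comm,
    ← mul_assoc, mul_inv_cancel₀ hne, one_mul]

theorem divDiffPow_succ (hx : Set.InjOn x t) {i : ι} (hi : i ∈ t) (N : ℕ) :
    divDiffPow x t (N + 1) = x i * divDiffPow x t N + divDiffPow x (t.erase i) N := by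
  have split : ∀ a ∈ t, x a ^ (N + 1) * ∏ j ∈ t.erase a, (x a - x j)⁻¹ =
      x i * (x a ^ N * ∏ j ∈ t.erase a, (x a - x j)⁻¹) +
        x a ^ N * ((x a - x i) * ∏ j ∈ t.erase a, (x a - x j)⁻¹) := fun a _ => by ring
  simp only [divDiffPow]
  rw [sum_congr rfl split, sum_add_distrib, ← mul_sum]
  congr 1
  rw [← add_sum_erase _ _ hi, sub_self, zero_mul, mul_zero, zero_add]
  exact sum_congr rfl fun a ha => by
    rw [sub_mul_prod_erase_inv hx (mem_of_mem_erase ha) hi (ne_of_mem_erase ha)]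

theorem divDiffPow_zero (hx : Set.InjOn x t) : divDiffPow x t 0 = if #t = 1 then 1 else 0 := by
  induction t using Finset.strongInduction with
  | H t ih =>
    rcases Nat.lt_or_ge 1 #t with ht | ht
    · obtain ⟨i, hi, j, hj, hij⟩ := one_lt_card.1 ht
      -- Expanding `divDiffPow x t 1` through `i` and through `j`; both erasures have the same size.
      have hstep_i := divDiffPow_succ hx hi 0
      have hstep_j := divDiffPow_succ hx hj 0
      rw [ih _ (erase_ssubset hi) (hx.mono (erase_subset i t)), card_erase_of_mem hi] at hstep_i
      rw [ih _ (erase_ssubset hj) (hx.mono (erase_subset j t)), card_erase_of_mem hj] at hstep_j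
      have hdiff : (x i - x j) * divDiffPow x t 0 = 0 := by linear_combination hstep_j - hstep_i
      rw [if_neg ht.ne']
      exact (mul_eq_zero.1 hdiff).resolve_left (sub_ne_zero.2 fun h => hij (hx hi hj h))
    · rcases Nat.le_one_iff_eq_zero_or_eq_one.1 ht with h0 | h1
      · simp [card_eq_zero.1 h0, divDiffPow]
      · obtain ⟨a, rfl⟩ := card_eq_one.1 h1
        simp [divDiffPow]

theorem divDiffPow_eq_zero (hx : Set.InjOn x t) {N : ℕ} (h : N + 1 < #t) :
    divDiffPow x t N = 0 := by
  induction N generalizing t with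
  | zero => rw [divDiffPow_zero hx, if_neg (by omega)]
  | succ N ih =>
    obtain ⟨i, hi⟩ := card_pos.1 (by omega : 0 < #t)
    rw [divDiffPow_succ hx hi, ih hx (by omega),
      ih (hx.mono (erase_subset i t)) (by rw [card_erase_of_mem hi]; omega), mul_zero, add_zero]

theorem divDiffPow_eq_completeHomog (hx : Set.InjOn x t) {N : ℕ} (h : #t ≤ N + 1) :
    divDiffPow x t N = completeHomog x t (N + 1 - #t) := by
  induction N generalizing t with
  | zero =>
    rcases Nat.le_one_iff_eq_zero_or_eq_one.1 h with h0 | h1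
    · simp [card_eq_zero.1 h0, divDiffPow, completeHomog_empty_succ]
    · obtain ⟨a, rfl⟩ := card_eq_one.1 h1
      simp [divDiffPow, completeHomog_zero]
  | succ N ih =>
    rcases t.eq_empty_or_nonempty with rfl | ⟨i, hi⟩
    · simp [divDiffPow, completeHomog_empty_succ]
    have hx' := hx.mono (erase_subset i t)
    have hcard := card_erase_add_one hi
    rw [divDiffPow_succ hx hi]
    rcases h.lt_or_eq with hlt | heq
    · rw [ih hx (by omega), ih hx' (by omega), show N + 1 + 1 - #t = N + 1 - #t + 1 by omega,
        completeHomog_succ x hi, show N + 1 - #(t.erase i) = N + 1 - #t + 1 by omega]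
    · rw [divDiffPow_eq_zero hx (by omega), ih hx' (by omega),
        show N + 1 - #(t.erase i) = 0 by omega, heq, Nat.sub_self, completeHomog_zero,
        completeHomog_zero, mul_zero, zero_add]

end DividedDifference

theorem Gfun_eq_divDiffPow (l : ℕ) {d : ℕ} (z : Fin d → ℝ) :
    Gfun l z = divDiffPow (fun o : Option (Fin d) => o.elim 1 z) univ (l - 1) := by
  rw [Gfun, divDiffPow, univ_option_eq_cons, sum_cons, erase_cons, prod_map, sum_map]
  congr 1
  · simp [one_div]
  · refine sum_congr rfl fun a _ => ?_
    have hne : none ≠ Function.Embedding.some a := (Option.some_ne_none a).symm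
    rw [erase_cons_of_ne _ hne, prod_cons, ← map_erase, prod_map]
    simp [div_eq_mul_inv, mul_assoc]

theorem Gfun_eq_sum_completeHomog {l d : ℕ} (hl : 1 ≤ l) {z : Fin d → ℝ}
    (hz : Function.Injective z) (hz1 : ∀ i, z i ≠ 1) :
    Gfun l z = ∑ m ∈ range (l - d), completeHomog z univ m := by
  have hx : Set.InjOn (fun o : Option (Fin d) => o.elim 1 z) (univ : Finset (Option (Fin d))) := by
    rintro (_ | a) - (_ | b) - h
    · rfl
    · exact absurd h.symm (hz1 b)
    · exact absurd h (hz1 a)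
    · exact congrArg some (hz h)
  have hcard : #(univ : Finset (Option (Fin d))) = d + 1 := by simp
  rw [Gfun_eq_divDiffPow]
  rcases le_or_gt (d + 1) l with h | h
  · rw [divDiffPow_eq_completeHomog hx (by omega), completeHomog_option_elim_one, hcard,
      show l - 1 + 1 - (d + 1) + 1 = l - d by omega]
  · rw [divDiffPow_eq_zero hx (by omega), show l - d = 0 by omega, range_zero, sum_empty]

section Cube

variable {ι : Type*} [Fintype ι]

theorem volume_setOf_apply_eq (i : ι) (c : ℝ) : volume {z : ι → ℝ | z i = c} = 0 := by
  rw [volume_pi]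
  exact Measure.pi_hyperplane (fun _ : ι => (volume : Measure ℝ)) i c

theorem volume_setOf_apply_eq_apply {i j : ι} (hij : i ≠ j) :
    volume {z : ι → ℝ | z i = z j} = 0 := by
  classical
  let L : (ι → ℝ) →ₗ[ℝ] ℝ := LinearMap.proj (R := ℝ) (φ := fun _ : ι => ℝ) i - LinearMap.proj j
  have hker : {z : ι → ℝ | z i = z j} = (LinearMap.ker L : Set (ι → ℝ)) := by
    ext z
    simp [L, sub_eq_zero]
  rw [hker]
  refine Measure.addHaar_submodule _ _ fun htop => ?_
  have hmem : Pi.single i (1 : ℝ) ∈ LinearMap.ker L := htop ▸ Submodule.mem_top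
  simp [L, hij.symm] at hmem

theorem ae_injective_and_forall_ne (c : ℝ) :
    ∀ᵐ z : ι → ℝ, Function.Injective z ∧ ∀ i, z i ≠ c := by
  have hinj : ∀ᵐ z : ι → ℝ, ∀ i j, i ≠ j → z i ≠ z j := by
    simp only [ae_all_iff]
    intro i j hij
    simpa [ae_iff] using volume_setOf_apply_eq_apply hij
  have hne : ∀ᵐ z : ι → ℝ, ∀ i, z i ≠ c := by
    rw [ae_all_iff]
    intro i
    simpa [ae_iff] using volume_setOf_apply_eq i c
  filter_upwards [hinj, hne] with z hz hzc
  exact ⟨fun i j h => by_contra fun hij => hz i j hij h, hzc⟩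

theorem integrableOn_cube {f : (ι → ℝ) → ℝ} (hf : Continuous f) :
    IntegrableOn f (Set.univ.pi fun _ : ι => Set.Icc (0 : ℝ) 1) :=
  hf.continuousOn.integrableOn_compact (isCompact_univ_pi fun _ => isCompact_Icc)

theorem setIntegral_Icc_pow (n : ℕ) : ∫ x in Set.Icc (0 : ℝ) 1, x ^ n = ((n : ℝ) + 1)⁻¹ := by
  rw [integral_Icc_eq_integral_Ioc, ← intervalIntegral.integral_of_le zero_le_one, integral_pow]
  simp

theorem setIntegral_cube_prod_pow (c : ι → ℕ) :
    ∫ z in Set.univ.pi (fun _ : ι => Set.Icc (0 : ℝ) 1), ∏ j, z j ^ c j =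
      ∏ j, ((c j : ℝ) + 1)⁻¹ := by
  rw [volume_pi, Measure.restrict_pi_pi, integral_fintype_prod_eq_prod (fun j x => x ^ c j)]
  exact prod_congr rfl fun j _ => setIntegral_Icc_pow (c j)

end Cube

section AverageOverCube

variable {ι : Type*} [DecidableEq ι]

noncomputable def avgCompleteHomog (s : Finset ι) (n : ℕ) : ℝ :=
  compositionSum (fun _ a => ((a : ℝ) + 1)⁻¹) s n

theorem setIntegral_cube_completeHomog [Fintype ι] (n : ℕ) :
    ∫ z in Set.univ.pi (fun _ : ι => Set.Icc (0 : ℝ) 1), completeHomog z univ n =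
      avgCompleteHomog (univ : Finset ι) n := by
  unfold completeHomog compositionSum
  rw [integral_finsetSum _ fun c _ => integrableOn_cube (ι := ι) (by fun_prop)]
  exact sum_congr rfl fun c _ => setIntegral_cube_prod_pow c

theorem sum_piAntidiag_prod_erase {s : Finset ι} {i : ι} (hi : i ∈ s) (n : ℕ) :
    ∑ c ∈ s.piAntidiag n, ∏ j ∈ s.erase i, ((c j : ℝ) + 1)⁻¹ =
      ∑ m ∈ range (n + 1), avgCompleteHomog (s.erase i) m := by
  set f := Function.update (fun _ : ι => fun a : ℕ => ((a : ℝ) + 1)⁻¹) i fun _ => 1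
  have hf : ∀ j ∈ s.erase i, f j = fun a : ℕ => ((a : ℝ) + 1)⁻¹ := fun j hj =>
    Function.update_of_ne (ne_of_mem_erase hj) _ _
  have h := compositionSum_of_mem_of_eq_one f hi (fun a => by simp [f]) n
  rw [compositionSum_congr hf] at h
  unfold avgCompleteHomog
  rw [← h, compositionSum]
  refine sum_congr rfl fun c _ => ?_
  rw [← mul_prod_erase s _ hi, show f i (c i) = 1 by simp [f], one_mul]
  exact prod_congr rfl fun j hj => by rw [hf j hj]

theorem add_card_mul_avgCompleteHomog (s : Finset ι) (n : ℕ) :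
    ((n : ℝ) + #s) * avgCompleteHomog s n =
      ∑ i ∈ s, ∑ m ∈ range (n + 1), avgCompleteHomog (s.erase i) m := by
  have key : ∀ c ∈ s.piAntidiag n, ((n : ℝ) + #s) * ∏ j ∈ s, ((c j : ℝ) + 1)⁻¹ =
      ∑ i ∈ s, ∏ j ∈ s.erase i, ((c j : ℝ) + 1)⁻¹ := by
    intro c hc
    have hsum : (n : ℝ) + #s = ∑ i ∈ s, ((c i : ℝ) + 1) := by
      rw [sum_add_distrib, ← Nat.cast_sum, (mem_piAntidiag.1 hc).1]
      simp
    rw [hsum, sum_mul]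
    refine sum_congr rfl fun i hi => ?_
    rw [← mul_prod_erase s _ hi, ← mul_assoc, mul_inv_cancel₀ (by positivity), one_mul]
  rw [avgCompleteHomog, compositionSum, mul_sum, sum_congr rfl key, sum_comm]
  exact sum_congr rfl fun i hi => sum_piAntidiag_prod_erase hi n

theorem factorial_mul_avgCompleteHomog {l : ℕ}
    (ih : ∀ s : Finset ι, ((l - 1).factorial : ℝ) * ∑ n ∈ range (l - #s), avgCompleteHomog s n =
      (#s).factorial * Nat.stirlingFirst l (#s + 1))
    {s : Finset ι} (hs : #s ≤ l) :
    (l.factorial : ℝ) * avgCompleteHomog s (l - #s) = (#s).factorial * Nat.stirlingFirst l #s := by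
  rcases s.eq_empty_or_nonempty with rfl | ⟨i, hi⟩
  · cases l <;> simp [avgCompleteHomog, compositionSum_empty]
  have hcard := card_erase_add_one hi
  have herase : ∀ j ∈ s, ((l - 1).factorial : ℝ) *
      ∑ m ∈ range (l - #s + 1), avgCompleteHomog (s.erase j) m =
        (#s - 1).factorial * Nat.stirlingFirst l #s := fun j hj => by
    rw [show l - #s + 1 = l - #(s.erase j) by rw [card_erase_of_mem hj]; omega, ih,
      card_erase_of_mem hj, Nat.sub_add_cancel (by omega)]
  calc (l.factorial : ℝ) * avgCompleteHomog s (l - #s)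
      = ((l - 1).factorial : ℝ) * (((l - #s : ℕ) + #s : ℝ) * avgCompleteHomog s (l - #s)) := by
        rw [← Nat.mul_factorial_pred (by omega : l ≠ 0), ← Nat.cast_add, Nat.sub_add_cancel hs]
        push_cast
        ring
    _ = ∑ i ∈ s, ((#s - 1).factorial : ℝ) * Nat.stirlingFirst l #s := by
        rw [add_card_mul_avgCompleteHomog, mul_sum]
        exact sum_congr rfl herase
    _ = (#s).factorial * Nat.stirlingFirst l #s := by
        rw [sum_const, nsmul_eq_mul, ← mul_assoc, ← Nat.cast_mul,
          Nat.mul_factorial_pred (card_ne_zero_of_mem hi)]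

theorem factorial_mul_sum_avgCompleteHomog (l : ℕ) (s : Finset ι) :
    ((l - 1).factorial : ℝ) * ∑ n ∈ range (l - #s), avgCompleteHomog s n =
      (#s).factorial * stirling1 l (#s + 1) := by
  rw [stirling1_eq_stirlingFirst]
  induction l generalizing s with
  | zero => simp
  | succ l ih =>
    rcases lt_or_ge l #s with hlt | hle
    · rw [show l + 1 - #s = 0 by omega, Nat.stirlingFirst_eq_zero_of_lt (by omega)]
      simp
    have hprev : (l.factorial : ℝ) * ∑ n ∈ range (l - #s), avgCompleteHomog s n =
        l * ((#s).factorial * Nat.stirlingFirst l (#s + 1)) := by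
      rcases Nat.eq_zero_or_pos l with rfl | hl
      · simp
      · rw [← ih, ← Nat.mul_factorial_pred hl.ne', Nat.cast_mul, mul_assoc]
    rw [Nat.add_sub_cancel, show l + 1 - #s = l - #s + 1 by omega, sum_range_succ, mul_add, hprev,
      factorial_mul_avgCompleteHomog ih hle, Nat.stirlingFirst_succ_succ]
    push_cast
    ring

end AverageOverCube

theorem stirling1_integral (l k : ℕ) (hl : 1 ≤ l) (hk : 2 ≤ k) :
    (stirling1 l k : ℝ) / (l - 1).factorial =
      (1 / (k - 1).factorial : ℝ) *
        ∫ z in Set.univ.pi (fun _ : Fin (k - 1) => Set.Icc (0 : ℝ) 1), Gfun l z := by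
  obtain ⟨d, rfl⟩ : ∃ d, k = d + 1 := ⟨k - 1, by omega⟩
  have hG : ∫ z in Set.univ.pi (fun _ : Fin d => Set.Icc (0 : ℝ) 1), Gfun l z =
      ∑ n ∈ range (l - d), avgCompleteHomog (univ : Finset (Fin d)) n := by
    rw [integral_congr_ae (g := fun z => ∑ n ∈ range (l - d), completeHomog z univ n),
      integral_finsetSum _ fun n _ => integrableOn_cube (continuous_completeHomog univ n)]
    · exact sum_congr rfl fun n _ => setIntegral_cube_completeHomog n
    · filter_upwards [ae_restrict_of_ae (ae_injective_and_forall_ne 1)] with z hz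
      exact Gfun_eq_sum_completeHomog hl hz.1 hz.2
  have hcomb := factorial_mul_sum_avgCompleteHomog l (univ : Finset (Fin d))
  rw [card_univ, Fintype.card_fin] at hcomb
  rw [Nat.add_sub_cancel, hG]
  field_simp
  linear_combination -hcomb
end

section
/- For every integer k ≥ 1, the power series identity (2·arcsin(X/2))^{2k} = (2k)! · ∑_{n≥k} H^{(2)}_{k-1}(n) / (n² · C(2n,n)) · X^{2n} holds, where H^{(2)}_0(n) = 1 and H^{(2)}_r(n) = ∑_{0<m₁<⋯<m_r<n} 1/(m₁²⋯m_r²). -/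
/-!
With `u = 2 arcsin (x / 2)` one has `u' = 2 / √(4 - x²)`, hence
`(4 - x²) (u ^ (m + 2))'' - x (u ^ (m + 2))' = 4 (m + 1) (m + 2) u ^ m`. The operator
`(4 - x²) D² - x D` sends `x ^ (2n)` to `8 n (2n - 1) x ^ (2n - 2) - 4 n² x ^ (2n)`, and the
recursions `H^{(2)}_r(n + 1) = H^{(2)}_r(n) + H^{(2)}_{r-1}(n) / n²` and
`(n + 1) C(2n + 2, n + 1) = 2 (2n + 1) C(2n, n)` turn this into the same relation between the series claimed for `u ^ (2k + 2)` and `u ^ (2k)`.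
By induction on `k`, both sides of the expansion of `u ^ (2k + 2)` then solve the same equation with
the same value and slope at `0`, and they agree on `(-2, 2)` because
`(4 - x²) y'' - x y' = √(4 - x²) (√(4 - x²) y')'`.
-/

/-- `H^{(2)}_r(n) = ∑_{0<m₁<⋯<m_r<n} 1/(m₁²⋯m_r²)`, with `H^{(2)}_0(n) = 1`. -/
noncomputable def H2 (r n : ℕ) : ℝ :=
  ∑ s ∈ Finset.powersetCard r (Finset.Icc 1 (n - 1)), ∏ m ∈ s, 1 / (m : ℝ) ^ 2

open Finset Real

theorem hasDerivAt_tsum_mul_pow {b : ℕ → ℝ} {j : ℕ → ℕ} {u : ℕ → ℝ} {r x : ℝ} (hr : 1 ≤ r)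
    (hx : |x| < r) (hu : Summable u) (hbu : ∀ n, |b n| * (j n + 1) * r ^ j n ≤ u n) :
    HasDerivAt (fun y ↦ ∑' n, b n * y ^ j n) (∑' n, b n * j n * x ^ (j n - 1)) x := by
  have hxr : x ∈ Set.Ioo (-r) r := abs_lt.mp hx
  refine hasDerivAt_tsum_of_isPreconnected (g := fun n y ↦ b n * y ^ j n)
    (g' := fun n y ↦ b n * j n * y ^ (j n - 1)) hu isOpen_Ioo isPreconnected_Ioo
    (fun n y _ ↦ ?_) (fun n y hy ↦ ?_) hxr (.of_norm_bounded hu fun n ↦ ?_) hxr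
  · simpa [mul_assoc] using (hasDerivAt_pow (j n) y).const_mul (b n)
  · rw [norm_eq_abs, abs_mul, abs_mul, abs_pow, Nat.abs_cast]
    calc |b n| * j n * |y| ^ (j n - 1) ≤ |b n| * (j n + 1) * r ^ j n := by
          gcongr
          · linarith
          · exact (pow_le_pow_left₀ (abs_nonneg y) (abs_lt.mpr hy).le _).trans
              (pow_le_pow_right₀ hr (Nat.sub_le _ _))
      _ ≤ u n := hbu n
  · rw [norm_eq_abs, abs_mul, abs_pow]
    calc |b n| * |x| ^ j n ≤ |b n| * (j n + 1) * r ^ j n := by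
          rw [mul_assoc]
          gcongr
          calc |x| ^ j n = 1 * |x| ^ j n := (one_mul _).symm
            _ ≤ (j n + 1) * r ^ j n := by
              gcongr
              linarith [(j n).cast_nonneg (α := ℝ)]
      _ ≤ u n := hbu n

section EvenPowerSeries

variable {a : ℕ → ℝ} {C : ℝ}

noncomputable def evenSeries (a : ℕ → ℝ) (x : ℝ) : ℝ := ∑' n, a n * x ^ (2 * n)

-- The truncated exponents `2 * n - 1`, `2 * n - 2` only matter at `n = 0`, where the factor
-- `2 * n` vanishes.
noncomputable def evenSeriesDeriv (a : ℕ → ℝ) (x : ℝ) : ℝ :=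
  ∑' n, a n * (2 * n) * x ^ (2 * n - 1)

noncomputable def evenSeriesDeriv2 (a : ℕ → ℝ) (x : ℝ) : ℝ :=
  ∑' n, a n * (2 * n) * (2 * n - 1) * x ^ (2 * n - 2)

theorem evenSeries_zero (a : ℕ → ℝ) : evenSeries a 0 = a 0 := by
  rw [evenSeries, tsum_eq_single 0 fun n hn ↦ by simp [hn]]
  simp

theorem evenSeriesDeriv_zero (a : ℕ → ℝ) : evenSeriesDeriv a 0 = 0 := by
  rw [evenSeriesDeriv, ← tsum_zero]
  refine tsum_congr fun n ↦ ?_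
  rcases n with _ | n
  · simp
  · simp [show 2 * (n + 1) - 1 ≠ 0 by omega]

theorem summable_geometric_majorant (C : ℝ) {r : ℝ} (hr0 : 0 ≤ r) (hr : r < 2) :
    Summable fun n : ℕ ↦ C * (2 * n + 1) ^ 2 * (r ^ 2 / 4) ^ n := by
  have hq : ‖r ^ 2 / 4‖ < 1 := by
    rw [norm_eq_abs, abs_of_nonneg (by positivity)]
    nlinarith
  have h (i : ℕ) := summable_pow_mul_geometric_of_norm_lt_one i hq
  refine ((((h 2).mul_left 4).add ((h 1).mul_left 4)).add (h 0)).mul_left C |>.congr fun n ↦ ?_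
  ring

theorem mul_pow_le_majorant (ha : ∀ n, |a n| ≤ C / 4 ^ n) {r : ℝ} (hr : 1 ≤ r) {n j : ℕ}
    {B : ℝ} (hB : B ≤ |a n| * (2 * n + 1) ^ 2) (hj : j ≤ 2 * n) :
    B * r ^ j ≤ C * (2 * n + 1) ^ 2 * (r ^ 2 / 4) ^ n := by
  have hC : 0 ≤ C / 4 ^ n := (abs_nonneg _).trans (ha n)
  calc B * r ^ j ≤ C / 4 ^ n * (2 * n + 1) ^ 2 * r ^ (2 * n) := by
        have hB' : B ≤ C / 4 ^ n * (2 * n + 1) ^ 2 := hB.trans (by gcongr; exact ha n)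
        exact mul_le_mul hB' (pow_le_pow_right₀ hr hj) (by positivity) (by positivity)
    _ = C * (2 * n + 1) ^ 2 * (r ^ 2 / 4) ^ n := by
        rw [pow_mul, div_pow]
        ring

theorem summable_mul_pow_of_bound (ha : ∀ n, |a n| ≤ C / 4 ^ n) {x : ℝ} (hx : |x| < 2) {b : ℕ → ℝ}
    {j : ℕ → ℕ} (hb : ∀ n, |b n| ≤ |a n| * (2 * n + 1) ^ 2) (hj : ∀ n, j n ≤ 2 * n) :
    Summable fun n ↦ b n * x ^ j n := by
  refine .of_norm_bounded (summable_geometric_majorant C (r := 1 + |x| / 2) (by positivity)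
    (by linarith)) fun n ↦ ?_
  rw [norm_eq_abs, abs_mul, abs_pow]
  calc |b n| * |x| ^ j n ≤ |b n| * (1 + |x| / 2) ^ j n := by gcongr; linarith
    _ ≤ _ := mul_pow_le_majorant ha (by linarith [abs_nonneg x]) (hb n) (hj n)

theorem hasDerivAt_tsum_mul_pow_of_bound (ha : ∀ n, |a n| ≤ C / 4 ^ n) {x : ℝ} (hx : |x| < 2)
    {b : ℕ → ℝ} {j : ℕ → ℕ} (hb : ∀ n, |b n| * (j n + 1) ≤ |a n| * (2 * n + 1) ^ 2)
    (hj : ∀ n, j n ≤ 2 * n) :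
    HasDerivAt (fun y ↦ ∑' n, b n * y ^ j n) (∑' n, b n * j n * x ^ (j n - 1)) x :=
  hasDerivAt_tsum_mul_pow (r := 1 + |x| / 2) (by linarith [abs_nonneg x]) (by linarith)
    (summable_geometric_majorant C (by positivity) (by linarith))
    fun n ↦ mul_pow_le_majorant ha (by linarith [abs_nonneg x]) (hb n) (hj n)

theorem hasDerivAt_evenSeries (ha : ∀ n, |a n| ≤ C / 4 ^ n) {x : ℝ} (hx : |x| < 2) :
    HasDerivAt (evenSeries a) (evenSeriesDeriv a x) x := by
  refine (hasDerivAt_tsum_mul_pow_of_bound ha hx (b := a) (j := fun n ↦ 2 * n) (fun n ↦ ?_)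
    fun n ↦ le_rfl).congr_deriv ?_
  · push_cast
    gcongr
    nlinarith
  · simp [evenSeriesDeriv]

theorem hasDerivAt_evenSeriesDeriv (ha : ∀ n, |a n| ≤ C / 4 ^ n) {x : ℝ} (hx : |x| < 2) :
    HasDerivAt (evenSeriesDeriv a) (evenSeriesDeriv2 a x) x := by
  refine (hasDerivAt_tsum_mul_pow_of_bound ha hx (b := fun n ↦ a n * (2 * n))
    (j := fun n ↦ 2 * n - 1) (fun n ↦ ?_) fun n ↦ Nat.sub_le _ _).congr_deriv
    (tsum_congr fun n ↦ ?_)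
  · have : ((2 * n - 1 : ℕ) : ℝ) ≤ 2 * n := by exact_mod_cast Nat.sub_le _ _
    rw [abs_mul, abs_of_nonneg (by positivity : (0 : ℝ) ≤ 2 * n), mul_assoc]
    gcongr
    nlinarith
  · rcases n with _ | n
    · simp
    · rw [Nat.cast_sub (by omega), Nat.sub_sub]
      push_cast
      ring

theorem evenSeries_ode (ha : ∀ n, |a n| ≤ C / 4 ^ n) {x : ℝ} (hx : |x| < 2) :
    (4 - x ^ 2) * evenSeriesDeriv2 a x - x * evenSeriesDeriv a x =
      evenSeries (fun n ↦ 8 * (n + 1) * (2 * n + 1) * a (n + 1) - 4 * n ^ 2 * a n) x := by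
  have h2 : Summable fun n : ℕ ↦ a n * (2 * n) * (2 * n - 1) * x ^ (2 * n - 2) := by
    refine summable_mul_pow_of_bound ha hx (fun n ↦ ?_) fun n ↦ by omega
    rw [abs_mul, abs_mul, mul_assoc, ← abs_mul]
    gcongr
    rw [abs_le]
    constructor <;> nlinarith
  have h1 : Summable fun n : ℕ ↦ a n * (2 * n) * x ^ (2 * n - 1) := by
    refine summable_mul_pow_of_bound ha hx (fun n ↦ ?_) fun n ↦ by omega
    rw [abs_mul, abs_of_nonneg (by positivity : (0 : ℝ) ≤ 2 * n)]
    gcongr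
    nlinarith
  have h0 : Summable fun n : ℕ ↦ 4 * n ^ 2 * a n * x ^ (2 * n) := by
    refine summable_mul_pow_of_bound ha hx (fun n ↦ ?_) fun n ↦ le_rfl
    rw [abs_mul, abs_of_nonneg (by positivity : (0 : ℝ) ≤ 4 * n ^ 2), mul_comm]
    gcongr
    nlinarith [n.cast_nonneg (α := ℝ)]
  have hA : Summable fun n : ℕ ↦ 8 * n * (2 * n - 1) * a n * x ^ (2 * n - 2) :=
    (h2.mul_left 4).congr fun n ↦ by ring
  have hA' : Summable fun n : ℕ ↦ 8 * (n + 1) * (2 * n + 1) * a (n + 1) * x ^ (2 * n) := by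
    refine ((summable_nat_add_iff 1).mpr hA).congr fun n ↦ ?_
    rw [show 2 * (n + 1) - 2 = 2 * n by omega]
    push_cast
    ring
  rw [evenSeriesDeriv2, evenSeriesDeriv, evenSeries, ← tsum_mul_left, ← tsum_mul_left,
    ← (h2.mul_left _).tsum_sub (h1.mul_left _)]
  calc ∑' n : ℕ, ((4 - x ^ 2) * (a n * (2 * n) * (2 * n - 1) * x ^ (2 * n - 2))
        - x * (a n * (2 * n) * x ^ (2 * n - 1)))
      = ∑' n : ℕ, (8 * n * (2 * n - 1) * a n * x ^ (2 * n - 2)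
          - 4 * n ^ 2 * a n * x ^ (2 * n)) := by
        refine tsum_congr fun n ↦ ?_
        rcases n with _ | n
        · simp
        · rw [show 2 * (n + 1) = 2 * n + 2 by ring, Nat.add_sub_cancel,
            show 2 * n + 2 - 1 = 2 * n + 1 by omega]
          push_cast
          ring
    _ = ∑' n : ℕ, 8 * (n + 1) * (2 * n + 1) * a (n + 1) * x ^ (2 * n)
          - ∑' n : ℕ, 4 * n ^ 2 * a n * x ^ (2 * n) := by
        rw [hA.tsum_sub h0, hA.tsum_eq_zero_add]
        congr 1
        simp only [CharP.cast_eq_zero, mul_zero, zero_mul, zero_add]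
        refine tsum_congr fun n ↦ ?_
        rw [show 2 * (n + 1) - 2 = 2 * n by omega]
        push_cast
        ring
    _ = _ := by
        rw [← hA'.tsum_sub h0]
        exact tsum_congr fun n ↦ by ring

end EvenPowerSeries

theorem eq_of_hasDerivAt_eq_zero {s : Set ℝ} (hs : IsOpen s) (hs' : IsPreconnected s) {f : ℝ → ℝ}
    (hf : ∀ x ∈ s, HasDerivAt f 0 x) {x y : ℝ} (hx : x ∈ s) (hy : y ∈ s) : f x = f y :=
  hs.is_const_of_deriv_eq_zero hs' (fun z hz ↦ (hf z hz).differentiableAt.differentiableWithinAt)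
    (fun z hz ↦ (hf z hz).deriv) hx hy

theorem sqrt_four_sub_sq_pos {x : ℝ} (hx : |x| < 2) : 0 < √(4 - x ^ 2) :=
  sqrt_pos.mpr (by nlinarith [abs_nonneg x, sq_abs x])

theorem hasDerivAt_sqrt_four_sub_sq {x : ℝ} (hx : |x| < 2) :
    HasDerivAt (fun y ↦ √(4 - y ^ 2)) (-x / √(4 - x ^ 2)) x := by
  have h := ((hasDerivAt_pow 2 x).const_sub 4).sqrt (sqrt_pos.mp (sqrt_four_sub_sq_pos hx)).ne'
  refine h.congr_deriv ?_
  field_simp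
  ring

theorem hasDerivAt_two_mul_arcsin_half {x : ℝ} (hx : |x| < 2) :
    HasDerivAt (fun y ↦ 2 * arcsin (y / 2)) (2 / √(4 - x ^ 2)) x := by
  obtain ⟨hx₁, hx₂⟩ := abs_lt.mp hx
  have h := ((hasDerivAt_arcsin (x := x / 2) (by linarith) (by linarith)).comp x
    ((hasDerivAt_id' x).div_const 2)).const_mul 2
  refine h.congr_deriv ?_
  rw [show 4 - x ^ 2 = 2 ^ 2 * (1 - (x / 2) ^ 2) by ring, sqrt_mul (by norm_num),
    sqrt_sq two_pos.le]
  field_simp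

theorem eq_zero_of_ode {h h' h'' : ℝ → ℝ} (hd : ∀ x, |x| < 2 → HasDerivAt h (h' x) x)
    (hd' : ∀ x, |x| < 2 → HasDerivAt h' (h'' x) x)
    (hode : ∀ x, |x| < 2 → (4 - x ^ 2) * h'' x = x * h' x) (h0 : h 0 = 0) (h'0 : h' 0 = 0)
    {x : ℝ} (hx : |x| < 2) : h x = 0 := by
  have hmem {y : ℝ} : y ∈ Set.Ioo (-2) 2 ↔ |y| < 2 := abs_lt.symm
  have h0mem : (0 : ℝ) ∈ Set.Ioo (-2) 2 := by norm_num
  have hflux : ∀ y ∈ Set.Ioo (-2 : ℝ) 2, HasDerivAt (fun y ↦ √(4 - y ^ 2) * h' y) 0 y := by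
    intro y hy
    rw [hmem] at hy
    have hs := sqrt_four_sub_sq_pos hy
    have hsq : √(4 - y ^ 2) ^ 2 = 4 - y ^ 2 := sq_sqrt (sqrt_pos.mp hs).le
    refine ((hasDerivAt_sqrt_four_sub_sq hy).mul (hd' y hy)).congr_deriv ?_
    field_simp
    linear_combination hode y hy + h'' y * hsq
  have hflat : ∀ y ∈ Set.Ioo (-2 : ℝ) 2, HasDerivAt h 0 y := by
    intro y hy
    have hconst := eq_of_hasDerivAt_eq_zero isOpen_Ioo isPreconnected_Ioo hflux hy h0mem
    rw [h'0, mul_zero] at hconst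
    rw [hmem] at hy
    have h'y : h' y = 0 := (mul_eq_zero.mp hconst).resolve_left (sqrt_four_sub_sq_pos hy).ne'
    simpa [h'y] using hd y hy
  rw [← h0]
  exact eq_of_hasDerivAt_eq_zero isOpen_Ioo isPreconnected_Ioo hflat (hmem.mpr hx) h0mem

theorem hasDerivAt_two_mul_arcsin_half_pow (m : ℕ) {x : ℝ} (hx : |x| < 2) :
    HasDerivAt (fun y ↦ (2 * arcsin (y / 2)) ^ (m + 2))
      (2 * (m + 2) * (2 * arcsin (x / 2)) ^ (m + 1) / √(4 - x ^ 2)) x := by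
  refine ((hasDerivAt_two_mul_arcsin_half hx).pow (m + 2)).congr_deriv ?_
  push_cast
  ring

-- The derivative is the value of `y''` forced by `(4 - x²) y'' - x y' = 4 (m + 1) (m + 2) u ^ m`.
theorem hasDerivAt_two_mul_arcsin_half_pow_deriv (m : ℕ) {x : ℝ} (hx : |x| < 2) :
    HasDerivAt (fun y ↦ 2 * (m + 2) * (2 * arcsin (y / 2)) ^ (m + 1) / √(4 - y ^ 2))
      ((4 * (m + 1) * (m + 2) * (2 * arcsin (x / 2)) ^ m
        + x * (2 * (m + 2) * (2 * arcsin (x / 2)) ^ (m + 1) / √(4 - x ^ 2))) / (4 - x ^ 2)) x := by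
  have hs := sqrt_four_sub_sq_pos hx
  have hsq : √(4 - x ^ 2) ^ 2 = 4 - x ^ 2 := sq_sqrt (sqrt_pos.mp hs).le
  refine ((((hasDerivAt_two_mul_arcsin_half hx).pow (m + 1)).const_mul (2 * ((m : ℝ) + 2))).div
    (hasDerivAt_sqrt_four_sub_sq hx) hs.ne').congr_deriv ?_
  generalize √(4 - x ^ 2) = s at hs hsq ⊢
  rw [← hsq, Pi.pow_apply]
  field_simp
  push_cast
  ring

namespace H2

theorem zero_left (n : ℕ) : H2 0 n = 1 := by
  simp [H2]

theorem eq_zero_of_le {r n : ℕ} (h : n ≤ r) (hr : 0 < r) : H2 r n = 0 := by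
  rw [H2, powersetCard_eq_empty.mpr (by simp only [Nat.card_Icc]; omega), sum_empty]

theorem nonneg (r n : ℕ) : 0 ≤ H2 r n :=
  sum_nonneg fun _ _ ↦ prod_nonneg fun _ _ ↦ by positivity

theorem succ_sub (r n : ℕ) : H2 (r + 1) (n + 1) - H2 (r + 1) n = H2 r n / (n : ℝ) ^ 2 := by
  rcases Nat.eq_zero_or_pos n with rfl | hn
  · simp [eq_zero_of_le]
  have hIcc : Icc 1 (n + 1 - 1) = insert n (Icc 1 (n - 1)) := by
    ext; simp only [mem_Icc, mem_insert]; omega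
  have hn_notMem : n ∉ Icc 1 (n - 1) := by simp only [mem_Icc]; omega
  have hnotMem_of_mem {s} (hs : s ∈ powersetCard r (Icc 1 (n - 1))) : n ∉ s :=
    fun h ↦ hn_notMem ((mem_powersetCard.mp hs).1 h)
  have hdisj : Disjoint (powersetCard (r + 1) (Icc 1 (n - 1)))
      ((powersetCard r (Icc 1 (n - 1))).image (insert n)) := by
    refine disjoint_left.mpr fun s hs hs' ↦ ?_
    obtain ⟨t, -, rfl⟩ := mem_image.mp hs'
    exact hn_notMem ((mem_powersetCard.mp hs).1 (mem_insert_self n t))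
  rw [H2, H2, H2, hIcc, powersetCard_succ_insert hn_notMem, sum_union hdisj, add_sub_cancel_left,
    sum_image fun s hs t ht hst ↦ ?_, sum_div]
  · refine sum_congr rfl fun s hs ↦ ?_
    rw [prod_insert (hnotMem_of_mem hs)]
    ring
  · rw [← erase_insert (hnotMem_of_mem hs), ← erase_insert (hnotMem_of_mem ht), hst]

theorem le_exp_tsum (r n : ℕ) : H2 r n ≤ exp (∑' m : ℕ, 1 / (m : ℝ) ^ 2) := by
  have hsum : Summable fun m : ℕ ↦ 1 / (m : ℝ) ^ 2 :=
    Real.summable_one_div_nat_pow.mpr one_lt_two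
  calc H2 r n ≤ ∑ t ∈ (Icc 1 (n - 1)).powerset, ∏ m ∈ t, 1 / (m : ℝ) ^ 2 :=
        sum_le_sum_of_subset_of_nonneg (fun _ ht ↦ mem_powerset.mpr (mem_powersetCard.mp ht).1)
          fun _ _ _ ↦ prod_nonneg fun _ _ ↦ by positivity
    _ = ∏ m ∈ Icc 1 (n - 1), (1 + 1 / (m : ℝ) ^ 2) := (prod_one_add _).symm
    _ ≤ exp (∑ m ∈ Icc 1 (n - 1), 1 / (m : ℝ) ^ 2) :=
        prod_one_add_le_exp_sum _ fun _ ↦ by positivity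
    _ ≤ exp (∑' m : ℕ, 1 / (m : ℝ) ^ 2) :=
        exp_le_exp.mpr (hsum.sum_le_tsum _ fun _ _ ↦ by positivity)

end H2

-- The value at `k = 0` is the constant series `1`, where the induction on `k` starts.
noncomputable def arcsinPowCoeff (k n : ℕ) : ℝ :=
  if k = 0 then (if n = 0 then 1 else 0)
  else (2 * k).factorial * H2 (k - 1) n / ((n : ℝ) ^ 2 * (2 * n).choose n)

theorem arcsinPowCoeff_zero_left (n : ℕ) : arcsinPowCoeff 0 n = if n = 0 then 1 else 0 := rfl

theorem arcsinPowCoeff_succ (k n : ℕ) :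
    arcsinPowCoeff (k + 1) n
      = (2 * k + 2).factorial * H2 k n / ((n : ℝ) ^ 2 * (2 * n).choose n) := by
  simp [arcsinPowCoeff, mul_add]

theorem arcsinPowCoeff_eq_zero_of_lt {k n : ℕ} (h : n < k) : arcsinPowCoeff k n = 0 := by
  obtain ⟨k, rfl⟩ : ∃ j, k = j + 1 := ⟨k - 1, by omega⟩
  rcases Nat.eq_zero_or_pos n with rfl | hn
  · simp [arcsinPowCoeff_succ]
  · rw [arcsinPowCoeff_succ, H2.eq_zero_of_le (by omega) (by omega), mul_zero, zero_div]

theorem cast_centralBinom_pos (n : ℕ) : (0 : ℝ) < (2 * n).choose n := by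
  exact_mod_cast Nat.centralBinom_pos n

theorem arcsinPowCoeff_succ_succ_mul (k n : ℕ) :
    8 * (n + 1) * (2 * n + 1) * arcsinPowCoeff (k + 1) (n + 1)
      = 4 * (2 * k + 2).factorial * H2 k (n + 1) / (2 * n).choose n := by
  have hC : ((n : ℝ) + 1) * (2 * (n + 1)).choose (n + 1) = 2 * (2 * n + 1) * (2 * n).choose n := by
    exact_mod_cast Nat.succ_mul_centralBinom_succ n
  have := cast_centralBinom_pos n
  have := cast_centralBinom_pos (n + 1)
  rw [arcsinPowCoeff_succ]
  push_cast
  field_simp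
  linear_combination -4 * H2 k (n + 1) * hC

theorem arcsinPowCoeff_succ_recurrence (k n : ℕ) :
    8 * (n + 1) * (2 * n + 1) * arcsinPowCoeff (k + 1) (n + 1)
        - 4 * n ^ 2 * arcsinPowCoeff (k + 1) n
      = 8 * (k + 1) * (2 * k + 1) * arcsinPowCoeff k n := by
  rw [arcsinPowCoeff_succ_succ_mul]
  rcases Nat.eq_zero_or_pos n with rfl | hn
  · cases k <;> norm_num [arcsinPowCoeff, H2.zero_left, H2.eq_zero_of_le]
  have hCn := cast_centralBinom_pos n
  have hsecond : 4 * (n : ℝ) ^ 2 * arcsinPowCoeff (k + 1) n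
      = 4 * (2 * k + 2).factorial * H2 k n / (2 * n).choose n := by
    rw [arcsinPowCoeff_succ]
    field_simp
  rw [hsecond, ← sub_div, mul_assoc, mul_assoc, ← mul_sub]
  cases k with
  | zero => simp [H2.zero_left, arcsinPowCoeff_zero_left, hn.ne']
  | succ j =>
    rw [← mul_sub, H2.succ_sub, arcsinPowCoeff_succ,
      show 2 * (j + 1) + 2 = (2 * j + 2 + 1) + 1 by ring, Nat.factorial_succ, Nat.factorial_succ]
    push_cast
    field_simp
    ring

theorem exists_abs_arcsinPowCoeff_le (k : ℕ) : ∃ C, ∀ n, |arcsinPowCoeff k n| ≤ C / 4 ^ n := by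
  cases k with
  | zero =>
    refine ⟨1, fun n ↦ ?_⟩
    rcases n with _ | n <;> simp [arcsinPowCoeff_zero_left]
  | succ k =>
    set B := exp (∑' m : ℕ, 1 / (m : ℝ) ^ 2)
    refine ⟨2 * (2 * k + 2).factorial * B, fun n ↦ ?_⟩
    rcases Nat.eq_zero_or_pos n with rfl | hn
    · rw [arcsinPowCoeff_eq_zero_of_lt k.succ_pos, abs_zero]
      positivity
    have h4 : (4 : ℝ) ^ n ≤ 2 * n * (2 * n).choose n := by
      exact_mod_cast Nat.four_pow_le_two_mul_self_mul_centralBinom n hn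
    have hn1 : (1 : ℝ) ≤ n := by exact_mod_cast hn
    have hCn := cast_centralBinom_pos n
    rw [arcsinPowCoeff_succ, abs_of_nonneg (by have := H2.nonneg k n; positivity),
      div_le_div_iff₀ (by positivity) (by positivity)]
    calc (2 * k + 2).factorial * H2 k n * 4 ^ n
        ≤ (2 * k + 2).factorial * B * (2 * n * (2 * n).choose n) := by
          gcongr
          exact H2.le_exp_tsum k n
      _ ≤ 2 * (2 * k + 2).factorial * B * (n ^ 2 * (2 * n).choose n) := by
          have hBC : 0 ≤ (2 * k + 2).factorial * B * (2 * n).choose n := by positivity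
          have hn2 : (n : ℝ) ≤ n ^ 2 := by nlinarith
          nlinarith [mul_le_mul_of_nonneg_left hn2 hBC]

theorem evenSeries_arcsinPowCoeff_ode (k : ℕ) {x : ℝ} (hx : |x| < 2) :
    (4 - x ^ 2) * evenSeriesDeriv2 (arcsinPowCoeff (k + 1)) x
        - x * evenSeriesDeriv (arcsinPowCoeff (k + 1)) x
      = 8 * (k + 1) * (2 * k + 1) * evenSeries (arcsinPowCoeff k) x := by
  obtain ⟨C, hC⟩ := exists_abs_arcsinPowCoeff_le (k + 1)
  rw [evenSeries_ode hC hx, evenSeries, evenSeries, ← tsum_mul_left]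
  exact tsum_congr fun n ↦ by rw [arcsinPowCoeff_succ_recurrence]; ring

theorem two_mul_arcsin_half_pow_eq_evenSeries (k : ℕ) {x : ℝ} (hx : |x| < 2) :
    (2 * arcsin (x / 2)) ^ (2 * k) = evenSeries (arcsinPowCoeff k) x := by
  induction k generalizing x with
  | zero => simp [evenSeries, arcsinPowCoeff_zero_left]
  | succ k ih =>
    obtain ⟨C, hC⟩ := exists_abs_arcsinPowCoeff_le (k + 1)
    have h := eq_zero_of_ode
      (h := fun y ↦ (2 * arcsin (y / 2)) ^ (2 * k + 2) - evenSeries (arcsinPowCoeff (k + 1)) y)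
      (fun y hy ↦ (hasDerivAt_two_mul_arcsin_half_pow (2 * k) hy).sub (hasDerivAt_evenSeries hC hy))
      (fun y hy ↦ (hasDerivAt_two_mul_arcsin_half_pow_deriv (2 * k) hy).sub
        (hasDerivAt_evenSeriesDeriv hC hy))
      (fun y hy ↦ ?_) (by simp [evenSeries_zero, arcsinPowCoeff_succ])
      (by simp [evenSeriesDeriv_zero]) hx
    · exact sub_eq_zero.mp h
    · have hy4 : 4 - y ^ 2 ≠ 0 := (sqrt_pos.mp (sqrt_four_sub_sq_pos hy)).ne'
      have hF := evenSeries_arcsinPowCoeff_ode k hy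
      rw [← ih hy] at hF
      rw [mul_sub, mul_div_cancel₀ _ hy4]
      push_cast
      linear_combination -hF

theorem arcsin_pow_expansion (k : ℕ) (hk : 1 ≤ k) (X : ℝ) (hX : |X| < 2) :
    (2 * Real.arcsin (X / 2)) ^ (2 * k) =
      ((2 * k).factorial : ℝ) *
        ∑' n : ℕ, if k ≤ n then
          H2 (k - 1) n / ((n : ℝ) ^ 2 * ((2 * n).choose n)) * X ^ (2 * n)
        else 0 := by
  obtain ⟨k, rfl⟩ : ∃ j, k = j + 1 := ⟨k - 1, by omega⟩
  rw [two_mul_arcsin_half_pow_eq_evenSeries _ hX, evenSeries, ← tsum_mul_left]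
  refine tsum_congr fun n ↦ ?_
  split_ifs with hn
  · rw [arcsinPowCoeff_succ, Nat.add_sub_cancel, mul_div_assoc, mul_assoc]
    rfl
  · rw [arcsinPowCoeff_eq_zero_of_lt (not_le.mp hn), mul_zero, zero_mul]
end

section
/- For integers m ≥ 0 and n₁, n₂ ≥ 1 with m ≥ n₁ + n₂ - 1, the sum C_m(n₁,n₂) = ∑_{a=0}^{m} (-1)^{m-a} H_a(n₁) H_{m-a}(n₂) equals 0, where H_0(n)=1 and H_r(n) = ∑_{0<m₁<⋯<m_r<n} 1/(m₁⋯m_r). -/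
/-- `H_r(n) = ∑_{0<m₁<⋯<m_r<n} 1/(m₁⋯m_r)`, with `H_0(n) = 1`. -/
noncomputable def Hh (r n : ℕ) : ℚ :=
  ∑ s ∈ Finset.powersetCard r (Finset.Icc 1 (n - 1)), ∏ m ∈ s, 1 / (m : ℚ)

theorem Hh_eq_zero_of_sub_one_lt {r n : ℕ} (h : n - 1 < r) : Hh r n = 0 := by
  rw [Hh, Finset.powersetCard_eq_empty.mpr (by rwa [Nat.card_Icc, Nat.add_sub_cancel]),
    Finset.sum_empty]

theorem C_vanishing (m n₁ n₂ : ℕ) (h₁ : 1 ≤ n₁) (h₂ : 1 ≤ n₂)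
    (hm : n₁ + n₂ - 1 ≤ m) :
    (∑ a ∈ Finset.range (m + 1), (-1 : ℚ) ^ (m - a) * Hh a n₁ * Hh (m - a) n₂) = 0 := by
  refine Finset.sum_eq_zero fun a _ => ?_
  rcases le_or_gt n₁ a with h | h
  · rw [Hh_eq_zero_of_sub_one_lt (by omega : n₁ - 1 < a), mul_zero, zero_mul]
  · rw [Hh_eq_zero_of_sub_one_lt (by omega : n₂ - 1 < m - a), mul_zero]
end

section
/- The formal power series φ(1/2; x) = ∑_{k≥1} (x^k/k!) ∏_{a=1}^{k-1}(k/2 - a) satisfies φ(1/2; x) = -2i·arcsin(ix/2) as analytic functions near x = 0; equivalently, the real power series identity φ(1/2; x) = 2·arcsinh(x/2) holds, where arcsinh(y) = log(y + √(1+y²)). -/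
/-!
For `k = 2n + 1` the product contains the factor `(k + 1) / 2 - (n + 1) = 0`, so only even `k`
contribute. For `k = 2n` the product is `(2n)! * choose (n - 1/2) (2n)`, and
`4 ^ n * choose (n - 1/2) (2n) = choose (-1/2) n`, so the `k = 2n` term is
`2 * choose (-1/2) n / (2n + 1) * (x / 2) ^ (2n + 1)`. Summing gives twice the arsinh series at
`x / 2`, which is the termwise antiderivative of the binomial series
`(1 + y ^ 2) ^ (-1/2) = arsinh' y`.
-/

open Finset Real

theorem Real.hasSum_one_add_rpow {a t : ℝ} (ht : |t| < 1) :
    HasSum (fun n ↦ Ring.choose a n * t ^ n) ((1 + t) ^ a) := by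
  have := one_add_rpow_hasFPowerSeriesOnBall_zero (a := a) |>.hasSum (y := t)
    (by simpa [← ofReal_norm] using ht)
  simpa [binomialSeries, FormalMultilinearSeries.ofScalars_apply_eq, mul_comm] using this

theorem Real.summable_abs_choose_mul_pow {a t : ℝ} (ht : |t| < 1) :
    Summable fun n ↦ |Ring.choose a n| * |t| ^ n := by
  have := (binomialSeries ℝ a).summable_norm_apply (x := t)
    (Metric.eball_subset_eball binomialSeries_radius_ge_one (by simpa [← ofReal_norm] using ht))
  simpa [binomialSeries, FormalMultilinearSeries.ofScalars_apply_eq, mul_comm] using this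

theorem hasDerivAt_tsum_div_mul_pow_two_mul_add_one {a : ℕ → ℝ} {r y : ℝ}
    (ha : Summable fun n ↦ |a n| * r ^ (2 * n)) (hy : |y| < r) :
    HasDerivAt (fun z ↦ ∑' n : ℕ, a n / (2 * n + 1) * z ^ (2 * n + 1))
      (∑' n : ℕ, a n * y ^ (2 * n)) y := by
  refine hasDerivAt_tsum_of_isPreconnected (y₀ := 0)
    (g := fun n z ↦ a n / (2 * n + 1) * z ^ (2 * n + 1))
    (g' := fun n z ↦ a n * z ^ (2 * n)) ha Metric.isOpen_ball
    (convex_ball (0 : ℝ) r).isPreconnected (fun n z _ ↦ ?_) (fun n z hz ↦ ?_)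
    (Metric.mem_ball_self ((abs_nonneg y).trans_lt hy)) (by simp) (by simpa using hy)
  · refine ((hasDerivAt_pow (2 * n + 1) z).const_mul _).congr_deriv ?_
    field_simp
    push_cast
    ring
  · rw [norm_mul, norm_pow, Real.norm_eq_abs, Real.norm_eq_abs]
    gcongr
    exact (by simpa using hz : |z| < r).le

theorem summable_div_mul_pow_two_mul_add_one {a : ℕ → ℝ} {r y : ℝ}
    (ha : Summable fun n ↦ |a n| * r ^ (2 * n)) (hy : |y| < r) :
    Summable fun n : ℕ ↦ a n / (2 * n + 1) * y ^ (2 * n + 1) := by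
  refine .of_norm_bounded (ha.mul_left r) fun n ↦ ?_
  rw [norm_mul, norm_div, norm_pow, Real.norm_eq_abs, Real.norm_eq_abs, Real.norm_eq_abs,
    abs_of_pos (by positivity : (0 : ℝ) < 2 * n + 1)]
  calc |a n| / (2 * n + 1) * |y| ^ (2 * n + 1) ≤ |a n| * r ^ (2 * n + 1) := by
        gcongr
        exact div_le_self (abs_nonneg _) (by linarith [n.cast_nonneg (α := ℝ)])
    _ = r * (|a n| * r ^ (2 * n)) := by ring

theorem Real.hasSum_arsinh {y : ℝ} (hy : |y| < 1) :
    HasSum (fun n : ℕ ↦ Ring.choose (-1 / 2 : ℝ) n / (2 * n + 1) * y ^ (2 * n + 1))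
      (arsinh y) := by
  set S := fun z : ℝ ↦
    ∑' n : ℕ, Ring.choose (-1 / 2 : ℝ) n / (2 * n + 1) * z ^ (2 * n + 1)
  have hdominated : ∀ {z : ℝ}, |z| < 1 →
      ∃ r, |z| < r ∧ Summable fun n ↦ |Ring.choose (-1 / 2 : ℝ) n| * r ^ (2 * n) := by
    intro z hz
    obtain ⟨r, hzr, hr1⟩ := exists_between hz
    refine ⟨r, hzr, ?_⟩
    have hr : |r ^ 2| < 1 := by
      rw [abs_pow, abs_of_pos ((abs_nonneg z).trans_lt hzr)]; nlinarith [abs_nonneg z]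
    simpa only [abs_pow, sq_abs, ← pow_mul] using summable_abs_choose_mul_pow (a := -1 / 2) hr
  have hS : ∀ z ∈ Metric.ball (0 : ℝ) 1, HasDerivAt S (√(1 + z ^ 2))⁻¹ z := by
    intro z hz
    rw [mem_ball_zero_iff, Real.norm_eq_abs] at hz
    obtain ⟨r, hzr, hr⟩ := hdominated hz
    have hz2 : |z ^ 2| < 1 := by rw [abs_pow]; nlinarith [abs_nonneg z]
    convert hasDerivAt_tsum_div_mul_pow_two_mul_add_one hr hzr using 1
    rw [sqrt_eq_rpow, ← rpow_neg (by positivity), ← (Real.hasSum_one_add_rpow hz2).tsum_eq]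
    norm_num [pow_mul]
  have heq : Set.EqOn S arsinh (Metric.ball 0 1) :=
    Metric.isOpen_ball.eqOn_of_deriv_eq (convex_ball (0 : ℝ) 1).isPreconnected
      (fun z hz ↦ (hS z hz).differentiableAt.differentiableWithinAt)
      differentiable_arsinh.differentiableOn
      (fun z hz ↦ (hS z hz).deriv.trans (hasDerivAt_arsinh z).deriv.symm)
      (Metric.mem_ball_self one_pos) (by simp [S])
  obtain ⟨r, hyr, hr⟩ := hdominated hy
  rw [← heq (by simpa using hy)]
  exact (summable_div_mul_pow_two_mul_add_one hr hyr).hasSum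

theorem Ring.choose_eq_prod_range_div_factorial {𝕜 : Type*} [Field 𝕜] [CharZero 𝕜]
    (a : 𝕜) (n : ℕ) :
    Ring.choose a n = (∏ j ∈ range n, (a - j)) / n.factorial := by
  rw [Ring.choose_eq_smul, ← descPochhammer_eval_eq_prod_range, smul_eq_mul, inv_mul_eq_div,
    ← descPochhammer_map (algebraMap ℤ 𝕜), Polynomial.eval_map_algebraMap,
    Polynomial.aeval_eq_smeval]

theorem prod_range_two_mul_sub_half_succ (n : ℕ) :
    ∏ j ∈ range (2 * (n + 1)), (((n + 1 : ℕ) : ℝ) - 1 / 2 - j) =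
      -(n + 1 / 2) ^ 2 * ∏ j ∈ range (2 * n), ((n : ℝ) - 1 / 2 - j) := by
  rw [show 2 * (n + 1) = 2 * n + 1 + 1 by ring, prod_range_succ', prod_range_succ]
  push_cast
  ring_nf

theorem four_pow_mul_choose_sub_half (n : ℕ) :
    4 ^ n * Ring.choose ((n : ℝ) - 1 / 2) (2 * n) = Ring.choose (-1 / 2 : ℝ) n := by
  simp only [Ring.choose_eq_prod_range_div_factorial]
  induction n with
  | zero => simp
  | succ n ih =>
    rw [prod_range_two_mul_sub_half_succ, prod_range_succ, show 2 * (n + 1) = 2 * n + 1 + 1 by ring,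
      Nat.factorial_succ, Nat.factorial_succ, Nat.factorial_succ]
    generalize ∏ j ∈ range (2 * n), ((n : ℝ) - 1 / 2 - j) = Q at ih ⊢
    generalize ∏ j ∈ range n, (-1 / 2 - (j : ℝ)) = P at ih ⊢
    push_cast
    field_simp at ih ⊢
    linear_combination (-4 * ((n : ℝ) + 1) * (2 * n + 1)) * ih

theorem phi_half_term_odd (x : ℝ) (n : ℕ) :
    x ^ (2 * n + 1 + 1) / (2 * n + 1 + 1).factorial *
      ∏ a ∈ range (2 * n + 1), ((((2 * n + 1 : ℕ) : ℝ) + 1) / 2 - ((a : ℝ) + 1)) = 0 := by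
  refine mul_eq_zero_of_right _ (prod_eq_zero (mem_range.mpr (by omega : n < 2 * n + 1)) ?_)
  push_cast
  ring

theorem phi_half_term_even (x : ℝ) (n : ℕ) :
    x ^ (2 * n + 1) / (2 * n + 1).factorial *
      ∏ a ∈ range (2 * n), ((((2 * n : ℕ) : ℝ) + 1) / 2 - ((a : ℝ) + 1)) =
      2 * (Ring.choose (-1 / 2 : ℝ) n / (2 * n + 1) * (x / 2) ^ (2 * n + 1)) := by
  have hprod : ∏ a ∈ range (2 * n), ((((2 * n : ℕ) : ℝ) + 1) / 2 - ((a : ℝ) + 1)) =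
      (2 * n).factorial * Ring.choose ((n : ℝ) - 1 / 2) (2 * n) := by
    rw [Ring.choose_eq_prod_range_div_factorial, mul_div_cancel₀ _ (by positivity)]
    refine prod_congr rfl fun a _ ↦ ?_
    push_cast
    ring
  have h4 : (2 : ℝ) ^ (2 * n) = 4 ^ n := by rw [pow_mul]; norm_num
  rw [hprod, ← four_pow_mul_choose_sub_half, Nat.factorial_succ, div_pow, pow_succ (2 : ℝ), h4]
  push_cast
  field_simp

theorem phi_half_eq_arsinh (x : ℝ) (hx : |x| < 2) :
    (∑' k : ℕ, x ^ (k + 1) / (k + 1).factorial *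
        ∏ a ∈ Finset.range k, (((k : ℝ) + 1) / 2 - ((a : ℝ) + 1))) =
      2 * Real.arsinh (x / 2) := by
  have hy : |x / 2| < 1 := by rw [abs_div, abs_two]; linarith
  have hodd : ∀ k ∉ Set.range (2 * · : ℕ → ℕ), x ^ (k + 1) / (k + 1).factorial *
      ∏ a ∈ Finset.range k, (((k : ℝ) + 1) / 2 - ((a : ℝ) + 1)) = 0 := by
    intro k hk
    obtain ⟨n, rfl⟩ : Odd k :=
      Nat.not_even_iff_odd.mp fun ⟨n, hn⟩ ↦ hk ⟨n, by dsimp only; omega⟩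
    exact phi_half_term_odd x n
  refine ((mul_right_injective₀ two_ne_zero).hasSum_iff hodd).mp ?_ |>.tsum_eq
  simpa only [Function.comp_def, phi_half_term_even] using (Real.hasSum_arsinh hy).mul_left 2
end

section
/- The function ψ(ω) = 1 − ω^{-s}, for any fixed s ∈ ℂ, satisfies the three-term functional equation ψ(ω) = ψ(ω+1) + (ω+1)^{-s} ψ(ω/(ω+1)) for all ω in the cut plane ℂ ∖ ℝ_{≤0}, where ω^{-s} denotes the principal branch. -/
open Complex

theorem periodlike_one_sub_inv_pow (s : ℂ) (ω : ℂ)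
    (hω : ¬(ω.im = 0 ∧ ω.re ≤ 0)) :
    1 - ω ^ (-s) =
      (1 - (ω + 1) ^ (-s)) +
        (ω + 1) ^ (-s) * (1 - (ω / (ω + 1)) ^ (-s)) := by
  push_neg at hω
  have hω0 : ω ≠ 0 := by
    intro h; subst h
    exact absurd (hω (by simp)) (by simp)
  have hω1 : ω + 1 ≠ 0 := by
    intro h
    have h' : ω = -1 := by linear_combination h
    have := hω (by rw [h']; simp)
    rw [h'] at this; simp at this
    linarith
  have hq0 : ω / (ω + 1) ≠ 0 := div_ne_zero hω0 hω1
  have hprod : (ω + 1) * (ω / (ω + 1)) = ω := mul_div_cancel₀ ω hω1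
  have hnsq : 0 < Complex.normSq (ω + 1) := Complex.normSq_pos.mpr hω1
  have him : (ω / (ω + 1)).im = ω.im / Complex.normSq (ω + 1) := by
    rw [Complex.div_im]
    simp [Complex.add_re, Complex.add_im]
    ring
  obtain ⟨k, hk⟩ : ∃ k : ℤ, (ω + 1).arg + (ω / (ω + 1)).arg - ω.arg = 2 * Real.pi * k := by
    have h := Complex.arg_mul_coe_angle hω1 hq0
    rw [hprod] at h
    exact (Real.Angle.angle_eq_iff_two_pi_dvd_sub.mp h.symm)
  have harg : (ω + 1).arg + (ω / (ω + 1)).arg ∈ Set.Ioc (-Real.pi) Real.pi := by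
    rcases lt_trichotomy ω.im 0 with hlt | heq | hgt
    · have ha1 : (ω + 1).arg < 0 := Complex.arg_neg_iff.mpr (by simpa using hlt)
      have ha2 : -Real.pi < (ω + 1).arg := Complex.neg_pi_lt_arg _
      have hb1 : (ω / (ω + 1)).arg < 0 := by
        rw [Complex.arg_neg_iff, him]
        exact div_neg_of_neg_of_pos hlt hnsq
      have hb2 : -Real.pi < (ω / (ω + 1)).arg := Complex.neg_pi_lt_arg _
      have hc1 : ω.arg < 0 := Complex.arg_neg_iff.mpr hlt
      have hc2 : -Real.pi < ω.arg := Complex.neg_pi_lt_arg _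
      have hk0 : k = 0 := by
        by_contra hne
        rcases lt_or_gt_of_ne hne with hneg | hpos
        · have h1 : (k : ℝ) ≤ -1 := by exact_mod_cast (show k ≤ -1 by omega)
          nlinarith [Real.pi_pos]
        · have h1 : (1 : ℝ) ≤ (k : ℝ) := by exact_mod_cast hpos
          nlinarith [Real.pi_pos]
      rw [hk0] at hk
      have heq2 : (ω + 1).arg + (ω / (ω + 1)).arg = ω.arg := by
        push_cast at hk; linarith
      rw [heq2]
      exact ⟨hc2, Complex.arg_le_pi ω⟩
    · have hre : 0 < ω.re := hω heq
      have ha : (ω + 1).arg = 0 :=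
        Complex.arg_eq_zero_iff.mpr ⟨by simp; linarith, by simp [heq]⟩
      have hb : (ω / (ω + 1)).arg = 0 := by
        apply Complex.arg_eq_zero_iff.mpr
        constructor
        · rw [Complex.div_re]
          simp [Complex.add_re, Complex.add_im, heq]
          positivity
        · rw [him, heq]; simp
      rw [ha, hb]
      constructor <;> simp [Real.pi_pos.le] <;> linarith [Real.pi_pos]
    · have ha1 : 0 < (ω + 1).arg := by
        have h0 : 0 ≤ (ω + 1).arg := Complex.arg_nonneg_iff.mpr (by simpa using hgt.le)
        rcases h0.lt_or_eq with h | h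
        · exact h
        · exfalso
          have := (Complex.arg_eq_zero_iff.mp h.symm).2
          simp at this; linarith
      have ha2 : (ω + 1).arg < Real.pi :=
        Complex.arg_lt_pi_iff.mpr (Or.inr (by simp; linarith))
      have hb0 : 0 < (ω / (ω + 1)).im := by rw [him]; positivity
      have hb1 : 0 < (ω / (ω + 1)).arg := by
        have h0 : 0 ≤ (ω / (ω + 1)).arg := Complex.arg_nonneg_iff.mpr hb0.le
        rcases h0.lt_or_eq with h | h
        · exact h
        · exfalso
          have := (Complex.arg_eq_zero_iff.mp h.symm).2
          linarith
      have hb2 : (ω / (ω + 1)).arg < Real.pi :=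
        Complex.arg_lt_pi_iff.mpr (Or.inr (by linarith))
      have hc1 : 0 < ω.arg := by
        have h0 : 0 ≤ ω.arg := Complex.arg_nonneg_iff.mpr hgt.le
        rcases h0.lt_or_eq with h | h
        · exact h
        · exact absurd (Complex.arg_eq_zero_iff.mp h.symm).2 (by linarith)
      have hc2 : ω.arg ≤ Real.pi := Complex.arg_le_pi ω
      have hk0 : k = 0 := by
        by_contra hne
        rcases lt_or_gt_of_ne hne with hneg | hpos
        · have h1 : (k : ℝ) ≤ -1 := by exact_mod_cast (show k ≤ -1 by omega)
          nlinarith [Real.pi_pos]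
        · have h1 : (1 : ℝ) ≤ (k : ℝ) := by exact_mod_cast hpos
          nlinarith [Real.pi_pos]
      rw [hk0] at hk
      have heq2 : (ω + 1).arg + (ω / (ω + 1)).arg = ω.arg := by
        push_cast at hk; linarith
      rw [heq2]
      exact ⟨by linarith [Real.pi_pos], hc2⟩
  have hlog : Complex.log ((ω + 1) * (ω / (ω + 1))) =
      Complex.log (ω + 1) + Complex.log (ω / (ω + 1)) :=
    Complex.log_mul hω1 hq0 harg
  have key : (ω + 1) ^ (-s) * (ω / (ω + 1)) ^ (-s) = ω ^ (-s) := by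
    rw [Complex.cpow_def_of_ne_zero hω1, Complex.cpow_def_of_ne_zero hq0,
      Complex.cpow_def_of_ne_zero hω0, ← Complex.exp_add, ← add_mul, ← hlog, hprod]
  linear_combination key
end
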